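/- Let q ≥ 3. The volume of any nonempty spherical bitrade in the Hamming graph H(q, q) is at least q!/2. -/

import Mathlib

open scoped BigOperators

/-- The ball of radius 1 centered at `x` in a graph `G`. -/
def ball1 {V : Type*} (G : SimpleGraph V) (x : V) : Set V := {y | y = x ∨ G.Adj x y}

/-- A perfect one-error-correcting code: the balls of radius 1 centered at the
vertices of `C` partition the vertex set. -/
def IsPerfectCode {V : Type*} (G : SimpleGraph V) (C : Set V) : Prop :=
  ∀ x : V, ∃! c, c ∈ C ∧ c ∈ ball1 G x

/-- A perfect bitrade: a pair of disjoint nonempty vertex sets such that every ball of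
radius 1 contains exactly one vertex of each, or none of either. -/
def IsPerfectBitrade {V : Type*} (G : SimpleGraph V) (T0 T1 : Set V) : Prop :=
  Disjoint T0 T1 ∧ T0.Nonempty ∧ T1.Nonempty ∧
    ∀ x : V,
      ((∃! y, y ∈ T0 ∧ y ∈ ball1 G x) ∧ (∃! y, y ∈ T1 ∧ y ∈ ball1 G x)) ∨
        (∀ y, y ∈ T0 ∪ T1 → y ∉ ball1 G x)

/-- A spherical bitrade: a pair of disjoint nonempty vertex sets such that every sphere of
radius 1 contains exactly one vertex of each, or none of either. -/
def IsSphericalBitrade {V : Type*} (G : SimpleGraph V) (S0 S1 : Set V) : Prop :=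
  Disjoint S0 S1 ∧ S0.Nonempty ∧ S1.Nonempty ∧
    ∀ x : V,
      ((∃! y, y ∈ S0 ∧ G.Adj x y) ∧ (∃! y, y ∈ S1 ∧ G.Adj x y)) ∨
        (∀ y, y ∈ S0 ∪ S1 → ¬ G.Adj x y)

/-- The Hamming graph `H(n,q)`: vertices are `n`-tuples over an alphabet of size `q`,
adjacent iff they differ in exactly one coordinate. -/
def hammingGraph (n q : ℕ) : SimpleGraph (Fin n → Fin q) where
  Adj x y := hammingDist x y = 1
  symm := ⟨by intro x y h; rwa [hammingDist_comm]⟩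
  loopless := ⟨by intro x h; simp [hammingDist_self] at h⟩

/-- `f` is a `μ`-eigenfunction of `G`: `f` is not identically zero and
`μ · f x = ∑_{y ∈ O(x)} f y` for every vertex `x`. -/
def IsEigenfun {V : Type*} (G : SimpleGraph V) (μ : ℝ) (f : V → ℝ) : Prop :=
  f ≠ 0 ∧ ∀ x : V, μ * f x = ∑ᶠ y ∈ G.neighborSet x, f y

/-- The characteristic function of a set of vertices. -/
noncomputable def chi {V : Type*} (C : Set V) : V → ℝ := Set.indicator C 1

/-- The code `C` has minimum (graph) distance exactly `d`. -/
def HasMinDist {V : Type*} (G : SimpleGraph V) (C : Set V) (d : ℕ) : Prop :=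
  (∀ x ∈ C, ∀ y ∈ C, x ≠ y → (d : ℕ∞) ≤ G.edist x y) ∧
    ∃ x ∈ C, ∃ y ∈ C, x ≠ y ∧ G.edist x y = d

/-- The code `C` of `n`-tuples has minimum Hamming distance exactly `d`. -/
def HasMinHDist {n q : ℕ} (C : Set (Fin n → Fin q)) (d : ℕ) : Prop :=
  (∀ x ∈ C, ∀ y ∈ C, x ≠ y → d ≤ hammingDist x y) ∧
    ∃ x ∈ C, ∃ y ∈ C, x ≠ y ∧ hammingDist x y = d

/-- `G` is distance-regular with intersection numbers `p i j k`. -/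
def IsDistRegular {V : Type*} (G : SimpleGraph V) (p : ℕ → ℕ → ℕ → ℕ) : Prop :=
  G.Connected ∧ ∀ (i j k : ℕ) (x y : V), G.edist x y = k →
    {z : V | G.edist x z = i ∧ G.edist z y = j}.ncard = p i j k

/-!
Let `f = χ S0 - χ S1` on `H(n,q)` and let `L k` sum a function along the lines in direction `k`.
The sphere condition says that `f` sums to zero over every sphere, i.e. `∑ k, L k f = n • f`.
The `L k` commute, satisfy `L k * L k = q • L k` and are positive semidefinite, so for
`g = L i (L j f)` one gets `2q ‖g‖² ≤ ⟪g, ∑ k, L k g⟫ = n ‖g‖²`; hence `g = 0` when `n < 2q`: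
`f` sums to zero over every two-dimensional plane.

For `q ≥ 3` every edge lies in a triangle, so no two points of `S0 ∪ S1` are adjacent and two
points of the same part have no common neighbour. The vanishing plane sum through `x ∈ S0` in
directions `i, j` then forces a point of `S1` differing from `x` exactly in coordinates `i` and
`j`, and these partners have pairwise distinct `i`-coordinates. So a `d`-dimensional subcube
meeting `S0 ∪ S1` meets it in at least `d` values of each free coordinate, and by induction in at
least `d!` points. Finally `∑ f = 0` gives `|S0| = |S1|`, whence `n! ≤ 2 |S0|`.
-/

open Finset Function
open scoped Nat

variable {n q : ℕ}

noncomputable def lineSum (k : Fin n) : Module.End ℝ ((Fin n → Fin q) → ℝ) :=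
  ∑ c : Fin q, LinearMap.funLeft ℝ ℝ (fun x => update x k c)

theorem lineSum_apply (k : Fin n) (f : (Fin n → Fin q) → ℝ) (x : Fin n → Fin q) :
    lineSum k f x = ∑ c, f (update x k c) := by
  simp [lineSum, LinearMap.funLeft_apply]

theorem lineSum_apply_update (k : Fin n) (f : (Fin n → Fin q) → ℝ) (x : Fin n → Fin q)
    (c : Fin q) : lineSum k f (update x k c) = lineSum k f x := by
  simp [lineSum_apply]

theorem lineSum_mul_self (k : Fin n) :
    lineSum (q := q) k * lineSum k = (q : ℝ) • lineSum k := by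
  ext f x
  simp [lineSum_apply]

theorem commute_lineSum (k l : Fin n) : Commute (lineSum (q := q) k) (lineSum l) := by
  rcases eq_or_ne k l with rfl | hkl
  · exact Commute.refl _
  refine LinearMap.ext fun f => funext fun x => ?_
  simp only [Module.End.mul_apply, lineSum_apply]
  rw [Finset.sum_comm]
  simp only [update_comm hkl]

theorem sum_lineSum_apply (k : Fin n) (f : (Fin n → Fin q) → ℝ) :
    ∑ x, lineSum k f x = q * ∑ x, f x := by
  let σ : Equiv.Perm (Fin q × (Fin n → Fin q)) :=
    Function.Involutive.toPerm (fun p => (p.2 k, update p.2 k p.1)) (by intro p; simp)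
  calc ∑ x, lineSum k f x = ∑ p, f (σ p).2 := by
        simp only [σ, lineSum_apply, Fintype.sum_prod_type]
        exact Finset.sum_comm
    _ = ∑ p : Fin q × (Fin n → Fin q), f p.2 := Equiv.sum_comp σ (fun p => f p.2)
    _ = q * ∑ x, f x := by simp [Fintype.sum_prod_type]

theorem dotProduct_lineSum_self_nonneg (k : Fin n) (f : (Fin n → Fin q) → ℝ) :
    0 ≤ f ⬝ᵥ lineSum k f := by
  have key : (q : ℝ) * (f ⬝ᵥ lineSum k f) = ∑ x, lineSum k f x ^ 2 := by
    rw [dotProduct, ← sum_lineSum_apply k]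
    refine Finset.sum_congr rfl fun x _ => ?_
    simp only [lineSum_apply (f := fun x => f x * lineSum k f x), lineSum_apply_update,
      ← Finset.sum_mul, ← lineSum_apply, sq]
  rcases q.eq_zero_or_pos with rfl | hq
  · simp [dotProduct, lineSum_apply]
  · refine (mul_nonneg_iff_of_pos_left (by exact_mod_cast hq : (0 : ℝ) < q)).mp ?_
    exact key ▸ Finset.sum_nonneg fun x _ => sq_nonneg _

theorem eq_zero_of_lineSum_eq_smul (hnq : n < 2 * q) {g : (Fin n → Fin q) → ℝ}
    (hg : (∑ k, lineSum k) g = (n : ℝ) • g) {i j : Fin n} (hij : i ≠ j)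
    (hi : lineSum i g = (q : ℝ) • g) (hj : lineSum j g = (q : ℝ) • g) : g = 0 := by
  have key : (2 * q : ℝ) * (g ⬝ᵥ g) ≤ n * (g ⬝ᵥ g) :=
    calc (2 * q : ℝ) * (g ⬝ᵥ g) = ∑ k ∈ {i, j}, g ⬝ᵥ lineSum k g := by
          rw [Finset.sum_pair hij, hi, hj, dotProduct_smul, smul_eq_mul]; ring
      _ ≤ ∑ k, g ⬝ᵥ lineSum k g := Finset.sum_le_sum_of_subset_of_nonneg (subset_univ _)
          fun k _ _ => dotProduct_lineSum_self_nonneg k g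
      _ = n * (g ⬝ᵥ g) := by
          rw [← dotProduct_sum, ← LinearMap.sum_apply, hg, dotProduct_smul, smul_eq_mul]
  have hnq' : (n : ℝ) < 2 * q := by exact_mod_cast hnq
  have hgg : g ⬝ᵥ g = 0 :=
    le_antisymm (by nlinarith) (Finset.sum_nonneg fun x _ => mul_self_nonneg (g x))
  exact dotProduct_self_eq_zero.mp hgg

theorem lineSum_lineSum_eq_zero (hnq : n < 2 * q) {f : (Fin n → Fin q) → ℝ}
    (hf : (∑ k, lineSum k) f = (n : ℝ) • f) {i j : Fin n} (hij : i ≠ j) :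
    lineSum i (lineSum j f) = 0 := by
  have hcomm : Commute (∑ k, lineSum (q := q) k) (lineSum i * lineSum j) :=
    Commute.sum_left _ _ _ fun k _ => (commute_lineSum k i).mul_right (commute_lineSum k j)
  have hjj : lineSum j (lineSum j f) = (q : ℝ) • lineSum j f :=
    LinearMap.congr_fun (lineSum_mul_self j) f
  refine eq_zero_of_lineSum_eq_smul hnq ?_ hij ?_ ?_
  · have := LinearMap.congr_fun hcomm.eq f
    simp only [Module.End.mul_apply] at this
    rw [this, hf, map_smul, map_smul]
  · exact LinearMap.congr_fun (lineSum_mul_self i) _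
  · have := LinearMap.congr_fun (commute_lineSum j i).eq (lineSum j f)
    simp only [Module.End.mul_apply] at this
    rw [this, hjj, map_smul]

theorem sum_eq_zero_of_lineSum_eq_smul (hn : 0 < n) (hq : 1 < q) {f : (Fin n → Fin q) → ℝ}
    (hf : (∑ k, lineSum k) f = (n : ℝ) • f) : ∑ x, f x = 0 := by
  have key : (n : ℝ) * ∑ x, f x = n * (q * ∑ x, f x) := by
    calc (n : ℝ) * ∑ x, f x = ∑ x, (∑ k, lineSum k) f x := by
          rw [hf, Finset.mul_sum]; rfl
      _ = n * (q * ∑ x, f x) := by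
          simp only [LinearMap.sum_apply, Finset.sum_apply]
          rw [Finset.sum_comm]
          simp [sum_lineSum_apply]
  have hn' : (n : ℝ) ≠ 0 := by positivity
  have hq' : (q : ℝ) - 1 ≠ 0 := sub_ne_zero.mpr (by exact_mod_cast hq.ne')
  have hsum := mul_left_cancel₀ hn' key
  exact (mul_eq_zero.mp (by linarith : ((q : ℝ) - 1) * ∑ x, f x = 0)).resolve_left hq'

section hammingDist

variable {ι : Type*} [Fintype ι] [DecidableEq ι] {β : ι → Type*} [∀ i, DecidableEq (β i)]

theorem hammingDist_update_self_of_ne {x : ∀ i, β i} {k : ι} {c : β k} (hc : x k ≠ c) :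
    hammingDist x (update x k c) = 1 := by
  rw [hammingDist, Finset.card_eq_one]
  refine ⟨k, Finset.ext fun i => ?_⟩
  rcases eq_or_ne i k with rfl | hi <;> simp [*]

theorem hammingDist_eq_one_iff {x y : ∀ i, β i} :
    hammingDist x y = 1 ↔ ∃ k c, x k ≠ c ∧ update x k c = y := by
  refine ⟨fun h => ?_, fun ⟨k, c, hc, hy⟩ => hy ▸ hammingDist_update_self_of_ne hc⟩
  obtain ⟨k, hk⟩ := Finset.card_eq_one.mp h
  have hdiff : ∀ i, x i ≠ y i ↔ i = k := fun i => by
    simpa using Finset.ext_iff.mp hk i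
  refine ⟨k, y k, (hdiff k).mpr rfl, funext fun i => ?_⟩
  rcases eq_or_ne i k with rfl | hi
  · simp
  · rw [update_of_ne hi]
    exact not_not.mp (mt (hdiff i).mp hi)

end hammingDist

theorem hammingGraph_adj_update {x : Fin n → Fin q} {k : Fin n} {c : Fin q} (hc : x k ≠ c) :
    (hammingGraph n q).Adj x (update x k c) :=
  hammingDist_update_self_of_ne hc

theorem hammingGraph_exists_adj_adj (hq : 3 ≤ q) (u w : Fin n → Fin q)
    (h : (hammingGraph n q).Adj u w) : ∃ z, (hammingGraph n q).Adj z u ∧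
      (hammingGraph n q).Adj z w := by
  obtain ⟨k, c, hc, rfl⟩ := hammingDist_eq_one_iff.mp h
  have hcard : ({u k, c} : Finset (Fin q)).card < (univ : Finset (Fin q)).card :=
    Finset.card_le_two.trans_lt (by simp; omega)
  obtain ⟨e, -, he⟩ := Finset.exists_mem_notMem_of_card_lt_card hcard
  simp only [Finset.mem_insert, Finset.mem_singleton, not_or] at he
  refine ⟨update u k e, (hammingGraph_adj_update (Ne.symm he.1)).symm, SimpleGraph.Adj.symm ?_⟩
  simpa using hammingGraph_adj_update (x := update u k c) (k := k)
    (by simpa using Ne.symm he.2)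

theorem sum_neighborFinset_hammingGraph (x : Fin n → Fin q)
    [Fintype ((hammingGraph n q).neighborSet x)] (f : (Fin n → Fin q) → ℝ) :
    ∑ y ∈ (hammingGraph n q).neighborFinset x, f y =
      ∑ k, ∑ c ∈ univ.erase (x k), f (update x k c) := by
  rw [Finset.sum_sigma', ← Finset.sum_image (g := fun p : (_ : Fin n) × Fin q => update x p.1 p.2)]
  · congr 1
    ext y
    rw [SimpleGraph.mem_neighborFinset]
    change hammingDist x y = 1 ↔ _
    rw [hammingDist_eq_one_iff]
    simp [eq_comm (b := x _)]
  · rintro ⟨k, c⟩ hkc ⟨l, d⟩ hld hxy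
    simp only [Finset.coe_sigma, Set.mem_sigma_iff, Finset.coe_univ, Set.mem_univ,
      Finset.coe_erase, Set.mem_sdiff, Set.mem_singleton_iff, true_and] at hkc hld hxy
    obtain rfl : k = l := by
      by_contra hkl
      have := congr_fun hxy k
      rw [update_self, update_of_ne hkl] at this
      exact hkc this
    simpa using congr_fun hxy k

theorem sum_lineSum_hammingGraph_apply (f : (Fin n → Fin q) → ℝ) (x : Fin n → Fin q)
    [Fintype ((hammingGraph n q).neighborSet x)] :
    (∑ k, lineSum k) f x = n * f x + ∑ y ∈ (hammingGraph n q).neighborFinset x, f y := by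
  have hline : ∀ k, lineSum k f x = f x + ∑ c ∈ univ.erase (x k), f (update x k c) := fun k => by
    rw [lineSum_apply, ← Finset.add_sum_erase _ _ (mem_univ (x k)), update_eq_self]
  simp only [LinearMap.sum_apply, Finset.sum_apply, hline, Finset.sum_add_distrib,
    Finset.sum_const, Finset.card_univ, Fintype.card_fin, nsmul_eq_mul,
    sum_neighborFinset_hammingGraph]

open Classical in
noncomputable def subcubeTrace (S : Set (Fin n → Fin q)) (K : Finset (Fin n))
    (t : Fin n → Fin q) : Finset (Fin n → Fin q) :=
  {y | y ∈ S ∧ ∀ k ∉ K, y k = t k}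

section subcubeTrace

variable {S : Set (Fin n → Fin q)} {K : Finset (Fin n)} {t y : Fin n → Fin q}

theorem mem_subcubeTrace : y ∈ subcubeTrace S K t ↔ y ∈ S ∧ ∀ k ∉ K, y k = t k := by
  simp [subcubeTrace]

theorem card_subcubeTrace_univ : (subcubeTrace S univ t).card = S.ncard := by
  rw [← Set.ncard_coe_finset]
  congr
  ext y
  simp [mem_subcubeTrace]

theorem filter_subcubeTrace {i : Fin n} (hi : i ∈ K) (v : Fin q) :
    (subcubeTrace S K t).filter (· i = v) = subcubeTrace S (K.erase i) (update t i v) := by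
  ext y
  simp only [mem_filter, mem_subcubeTrace, mem_erase, not_and']
  constructor
  · rintro ⟨⟨hS, hK⟩, rfl⟩
    refine ⟨hS, fun k hk => ?_⟩
    rcases eq_or_ne k i with rfl | hki
    · simp
    · rw [update_of_ne hki]
      exact hK k fun hkK => hk hkK hki
  · rintro ⟨hS, hK⟩
    refine ⟨⟨hS, fun k hk => ?_⟩, by simpa using hK i fun _ h => h rfl⟩
    have := hK k fun hkK => absurd hkK hk
    rwa [update_of_ne (ne_of_mem_of_not_mem hi hk).symm] at this

theorem factorial_card_le_card_subcubeTrace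
    (hS : ∀ K t i, (subcubeTrace S K t).Nonempty → i ∈ K →
      K.card ≤ ((subcubeTrace S K t).image (· i)).card)
    (K : Finset (Fin n)) (t : Fin n → Fin q) (hne : (subcubeTrace S K t).Nonempty) :
    K.card ! ≤ (subcubeTrace S K t).card := by
  induction hK : K.card generalizing K t with
  | zero => simpa using hne.card_pos
  | succ m ih =>
    obtain ⟨i, hi⟩ : K.Nonempty := card_pos.mp (by omega)
    set T := subcubeTrace S K t
    calc (m + 1)! = (m + 1) * m ! := Nat.factorial_succ m
      _ ≤ (T.image (· i)).card * m ! := Nat.mul_le_mul_right _ (hK ▸ hS K t i hne hi)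
      _ = ∑ v ∈ T.image (· i), m ! := by rw [sum_const, smul_eq_mul]
      _ ≤ ∑ v ∈ T.image (· i), (T.filter (· i = v)).card := sum_le_sum fun v hv => by
          obtain ⟨y, hy, rfl⟩ := mem_image.mp hv
          rw [filter_subcubeTrace hi]
          refine ih (K.erase i) _ ?_ (by rw [card_erase_of_mem hi, hK]; rfl)
          rw [← filter_subcubeTrace hi]
          exact ⟨y, mem_filter.mpr ⟨hy, rfl⟩⟩
      _ = T.card := (card_eq_sum_card_image _ _).symm

end subcubeTrace

theorem sum_chi_eq_one_of_existsUnique {V : Type*} {S : Set V} {s : Finset V}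
    (h : ∃! y, y ∈ S ∧ y ∈ s) : ∑ y ∈ s, chi S y = 1 := by
  obtain ⟨y, ⟨hyS, hys⟩, huniq⟩ := h
  rw [chi, Finset.sum_eq_single_of_mem y hys fun b hb hby =>
    Set.indicator_of_notMem (fun hbS => hby (huniq b ⟨hbS, hb⟩)) _]
  simp [hyS]

theorem sum_chi_eq_ncard {V : Type*} [Fintype V] (S : Set V) : ∑ x, chi S x = S.ncard := by
  classical
  simp [chi, Set.indicator_apply, Finset.sum_boole, Set.ncard_eq_toFinset_card']

namespace IsSphericalBitrade

section Graph

variable {V : Type*} {G : SimpleGraph V} {S0 S1 : Set V}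

theorem symm (h : IsSphericalBitrade G S0 S1) : IsSphericalBitrade G S1 S0 := by
  obtain ⟨hd, h0, h1, hx⟩ := h
  exact ⟨hd.symm, h1, h0, fun x =>
    (hx x).imp And.symm fun hn y hy => hn y (Set.union_comm S1 S0 ▸ hy)⟩

theorem eq_of_adj_of_adj (h : IsSphericalBitrade G S0 S1) {u w z : V} (hu : G.Adj z u)
    (hw : G.Adj z w) (hu0 : u ∈ S0) (hw0 : w ∈ S0) : u = w := by
  rcases h.2.2.2 z with ⟨⟨y, -, hy⟩, -⟩ | hn
  · exact (hy u ⟨hu0, hu⟩).trans (hy w ⟨hw0, hw⟩).symm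
  · exact absurd hu (hn u (Or.inl hu0))

theorem not_adj_of_mem_left_of_mem_left (h : IsSphericalBitrade G S0 S1)
    (htri : ∀ u w, G.Adj u w → ∃ z, G.Adj z u ∧ G.Adj z w) {u w : V} (hu : u ∈ S0)
    (hw : w ∈ S0) : ¬ G.Adj u w := fun huw => by
  obtain ⟨z, hzu, hzw⟩ := htri u w huw
  exact huw.ne (h.eq_of_adj_of_adj hzu hzw hu hw)

theorem not_adj_of_mem_left_of_mem_right (h : IsSphericalBitrade G S0 S1)
    (htri : ∀ u w, G.Adj u w → ∃ z, G.Adj z u ∧ G.Adj z w) {u w : V} (hu : u ∈ S0)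
    (hw : w ∈ S1) : ¬ G.Adj u w := fun huw => by
  rcases h.2.2.2 u with ⟨⟨y, ⟨hy0, huy⟩, -⟩, -⟩ | hn
  · exact h.not_adj_of_mem_left_of_mem_left htri hu hy0 huy
  · exact hn w (Or.inr hw) huw

theorem not_adj (h : IsSphericalBitrade G S0 S1)
    (htri : ∀ u w, G.Adj u w → ∃ z, G.Adj z u ∧ G.Adj z w) {u w : V} (hu : u ∈ S0 ∪ S1)
    (hw : w ∈ S0 ∪ S1) : ¬ G.Adj u w := by
  rcases hu with hu | hu <;> rcases hw with hw | hw
  · exact h.not_adj_of_mem_left_of_mem_left htri hu hw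
  · exact h.not_adj_of_mem_left_of_mem_right htri hu hw
  · exact h.symm.not_adj_of_mem_left_of_mem_right htri hu hw
  · exact h.symm.not_adj_of_mem_left_of_mem_left htri hu hw

theorem sum_neighborFinset_eq_zero (h : IsSphericalBitrade G S0 S1) (x : V)
    [Fintype (G.neighborSet x)] : ∑ y ∈ G.neighborFinset x, (chi S0 - chi S1) y = 0 := by
  rcases h.2.2.2 x with ⟨h0, h1⟩ | hn
  · simp only [Pi.sub_apply, Finset.sum_sub_distrib]
    rw [sum_chi_eq_one_of_existsUnique (by simpa using h0),
      sum_chi_eq_one_of_existsUnique (by simpa using h1), sub_self]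
  · refine Finset.sum_eq_zero fun y hy => ?_
    have hy := (G.mem_neighborFinset x y).mp hy
    have h0 : y ∉ S0 := fun hy0 => hn y (Or.inl hy0) hy
    have h1 : y ∉ S1 := fun hy1 => hn y (Or.inr hy1) hy
    simp [chi, h0, h1]

end Graph

section Hamming

variable {S0 S1 : Set (Fin n → Fin q)}

theorem sum_lineSum_chi_sub (h : IsSphericalBitrade (hammingGraph n q) S0 S1) :
    (∑ k, lineSum k) (chi S0 - chi S1) = (n : ℝ) • (chi S0 - chi S1) := by
  classical
  ext x
  rw [sum_lineSum_hammingGraph_apply, h.sum_neighborFinset_eq_zero, add_zero]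
  rfl

theorem ncard_eq (h : IsSphericalBitrade (hammingGraph n q) S0 S1) (hn : 0 < n) (hq : 1 < q) :
    S0.ncard = S1.ncard := by
  have := sum_eq_zero_of_lineSum_eq_smul hn hq h.sum_lineSum_chi_sub
  simpa [Finset.sum_sub_distrib, sum_chi_eq_ncard, sub_eq_zero] using this

theorem exists_update_update_mem (h : IsSphericalBitrade (hammingGraph n q) S0 S1) (hq : 3 ≤ q)
    (hnq : n < 2 * q) {x : Fin n → Fin q} (hx : x ∈ S0) {i j : Fin n} (hij : i ≠ j) :
    ∃ a b, x i ≠ a ∧ x j ≠ b ∧ update (update x i a) j b ∈ S1 := by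
  have hplane : ∑ a, ∑ b, (chi S0 - chi S1) (update (update x i a) j b) = 0 := by
    simpa [lineSum_apply] using
      congr_fun (lineSum_lineSum_eq_zero hnq h.sum_lineSum_chi_sub hij) x
  have hx1 : x ∉ S1 := Set.disjoint_left.mp h.1 hx
  have hnadj : ∀ {y}, y ∈ S0 ∪ S1 → ¬ (hammingGraph n q).Adj x y :=
    h.not_adj (hammingGraph_exists_adj_adj hq) (Or.inl hx)
  -- Points of the plane sharing a coordinate with `x` are `x` or its neighbours, hence not in `S1`.
  by_contra! hno
  have hnotS1 : ∀ a b, update (update x i a) j b ∉ S1 := by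
    intro a b hy
    by_cases ha : x i = a <;> by_cases hb : x j = b
    · simp [← ha, ← hb, hx1] at hy
    · rw [← ha, update_eq_self] at hy
      exact hnadj (Or.inr hy) (hammingGraph_adj_update hb)
    · rw [← hb, update_eq_self_iff.mpr (update_of_ne hij.symm _ _).symm] at hy
      exact hnadj (Or.inr hy) (hammingGraph_adj_update ha)
    · exact hno a b ha hb hy
  have hnonneg : ∀ y ∉ S1, 0 ≤ (chi S0 - chi S1) y := fun y hy => by
    by_cases hy0 : y ∈ S0 <;> simp [chi, hy, hy0]
  have hpos : 0 < ∑ a, ∑ b, (chi S0 - chi S1) (update (update x i a) j b) :=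
    Finset.sum_pos' (fun a _ => Finset.sum_nonneg fun b _ => hnonneg _ (hnotS1 a b))
      ⟨x i, mem_univ _, Finset.sum_pos' (fun b _ => hnonneg _ (hnotS1 _ b))
        ⟨x j, mem_univ _, by simp [chi, hx, hx1]⟩⟩
  exact hpos.ne' hplane

theorem card_le_card_image_subcubeTrace (h : IsSphericalBitrade (hammingGraph n q) S0 S1)
    (hq : 3 ≤ q) (hnq : n < 2 * q) {K : Finset (Fin n)} {t : Fin n → Fin q} {i : Fin n}
    (hne : (subcubeTrace (S0 ∪ S1) K t).Nonempty) (hi : i ∈ K) :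
    K.card ≤ ((subcubeTrace (S0 ∪ S1) K t).image (· i)).card := by
  obtain ⟨x, hx⟩ := hne
  wlog hx0 : x ∈ S0 generalizing S0 S1
  · have hx1 : x ∈ S1 := (mem_subcubeTrace.mp hx).1.resolve_left hx0
    rw [Set.union_comm] at hx ⊢
    exact this h.symm hx hx1
  have hxK := (mem_subcubeTrace.mp hx).2
  have : Nonempty (Fin q) := ⟨x i⟩
  choose! a b ha hb hab using fun j (hj : j ∈ K.erase i) =>
    h.exists_update_update_mem hq hnq hx0 (ne_of_mem_erase hj).symm
  have hmaps : Set.MapsTo a (K.erase i : Set (Fin n))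
      (((subcubeTrace (S0 ∪ S1) K t).image (· i)).erase (x i) : Set (Fin q)) := by
    intro j hj
    have hji := ne_of_mem_erase hj
    refine mem_erase.mpr ⟨(ha j hj).symm, mem_image.mpr ⟨_, mem_subcubeTrace.mpr
      ⟨Or.inr (hab j hj), fun k hk => ?_⟩, by simp [update_of_ne hji.symm]⟩⟩
    rw [update_of_ne (ne_of_mem_of_not_mem (mem_of_mem_erase hj) hk).symm,
      update_of_ne (ne_of_mem_of_not_mem hi hk).symm, hxK k hk]
  -- Two partners with the same `i`-coordinate would be points of `S1` with the common
  -- neighbour `update x i (a j)`.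
  have hinj : Set.InjOn a (K.erase i : Set (Fin n)) := by
    intro j hj j' hj' hjj'
    by_contra hne
    have hu : ∀ l ∈ K.erase i, (update x i (a j)) l ≠ b l := fun l hl => by
      rw [update_of_ne (ne_of_mem_erase hl)]
      exact hb l hl
    have heq := h.symm.eq_of_adj_of_adj (hammingGraph_adj_update (hu j hj))
      (hammingGraph_adj_update (hu j' hj')) (hab j hj) (by rw [hjj']; exact hab j' hj')
    have := congr_fun heq j
    rw [update_self, update_of_ne hne] at this
    exact hu j hj this.symm
  have hcard := card_le_card_of_injOn a hmaps hinj
  rw [card_erase_of_mem hi, card_erase_of_mem (mem_image_of_mem _ hx)] at hcard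
  have := card_pos.mpr ⟨x i, mem_image_of_mem (· i) hx⟩
  omega

theorem factorial_le_ncard_union (h : IsSphericalBitrade (hammingGraph n q) S0 S1)
    (hq : 3 ≤ q) (hnq : n < 2 * q) : n ! ≤ (S0 ∪ S1).ncard := by
  obtain ⟨x, hx⟩ := h.2.1
  have hne : (subcubeTrace (S0 ∪ S1) univ x).Nonempty :=
    ⟨x, mem_subcubeTrace.mpr ⟨Or.inl hx, by simp⟩⟩
  simpa [card_subcubeTrace_univ] using factorial_card_le_card_subcubeTrace
    (fun K t i hne hi => h.card_le_card_image_subcubeTrace hq hnq hne hi) univ x hne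

end Hamming

end IsSphericalBitrade

/-- For `q ≥ 3`, every (nonempty) spherical bitrade in `H(q,q)` has volume
at least `q!/2`. -/
theorem statement16 (q : ℕ) (hq : 3 ≤ q) (S0 S1 : Set (Fin q → Fin q))
    (hbt : IsSphericalBitrade (hammingGraph q q) S0 S1) :
    Nat.factorial q / 2 ≤ S0.ncard := by
  have hsupp := hbt.factorial_le_ncard_union hq (by omega)
  have hvol := hbt.ncard_eq (by omega) (by omega)
  rw [Set.ncard_union_eq hbt.1] at hsupp
  omega
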